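/- arXiv:2506.17102 — 2 statements merged into one kernel-verified Lean document; each statement's English description precedes it below -/
import Mathlib

section
/- Let 0 ≤ ε ≤ 1, let λ ∈ ℂ with Im λ ≥ 0, and let b₁, b₂, b₃, b₄ : (0,π) → ℂ be measurable with |b_j(x)| ≤ ε for a.e. x (j = 1,2,3,4). Define Y(x) = ((1 + b₁(x))e^{iλx}, b₃(x)e^{iλx}) and Z(x) = (b₂(x)e^{-i·conj(λ)·x}, (1 + b₄(x))e^{-i·conj(λ)·x}). Then |⟨Y, Z⟩_H| ≤ 2ε(1 + ε)·min(π, 1/(2 Im λ)) (interpreting 1/(2·0) as +∞). -/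
/-!
Since `conj (exp (-(I * conj λ * x))) = exp (I * λ * x)`, the integrand is
`((1 + b₁) conj b₂ + b₃ conj (1 + b₄)) * exp (2 I λ x)`, whose modulus is at most
`2ε(1 + ε) e^{-2 Im λ x}`. It remains to bound `∫₀^π e^{-2 Im λ x} dx` by `π` and, when
`Im λ > 0`, by `∫₀^∞ e^{-2 Im λ x} dx = 1 / (2 Im λ)`.
-/

open MeasureTheory Set Complex ComplexConjugate

lemma setIntegral_Ioo_exp_neg_mul_le_length {s p : ℝ} (hs : 0 ≤ s) (hp : 0 ≤ p) :
    ∫ x in Ioo 0 p, Real.exp (-s * x) ≤ p := by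
  calc ∫ x in Ioo 0 p, Real.exp (-s * x) ≤ ∫ _ in Ioo 0 p, (1 : ℝ) := by
        refine setIntegral_mono_on ?_ (integrableOn_const (by simp)) measurableSet_Ioo
          fun x hx ↦ Real.exp_le_one_iff.2 (by nlinarith [hx.1])
        exact (by fun_prop : Continuous fun x ↦ Real.exp (-s * x)).integrableOn_Icc.mono_set
          Ioo_subset_Icc_self
    _ = p := by simp [hp]

lemma setIntegral_Ioo_exp_neg_mul_le_inv {s : ℝ} (hs : 0 < s) (p : ℝ) :
    ∫ x in Ioo 0 p, Real.exp (-s * x) ≤ 1 / s := by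
  calc ∫ x in Ioo 0 p, Real.exp (-s * x) ≤ ∫ x in Ioi 0, Real.exp (-s * x) :=
        setIntegral_mono_set (exp_neg_integrableOn_Ioi 0 hs)
          (Filter.Eventually.of_forall fun _ ↦ (Real.exp_pos _).le) Ioo_subset_Ioi_self.eventuallyLE
    _ = 1 / s := by rw [integral_exp_mul_Ioi (by linarith)]; field_simp; simp

lemma conj_exp_neg_I_mul_conj_mul_ofReal (l : ℂ) (x : ℝ) :
    conj (exp (-(I * conj l * x))) = exp (I * l * x) := by
  rw [← exp_conj]; simp

lemma norm_exp_I_mul_mul_ofReal (l : ℂ) (x : ℝ) : ‖exp (I * l * x)‖ = Real.exp (-l.im * x) := by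
  simp [norm_exp]

lemma norm_one_add_mul_conj_add_mul_conj_one_add_le {ε : ℝ} {a b c d : ℂ} (ha : ‖a‖ ≤ ε)
    (hb : ‖b‖ ≤ ε) (hc : ‖c‖ ≤ ε) (hd : ‖d‖ ≤ ε) :
    ‖(1 + a) * conj b + c * conj (1 + d)‖ ≤ 2 * ε * (1 + ε) := by
  have h1a : ‖1 + a‖ ≤ 1 + ε := (norm_add_le 1 a).trans (by simpa using ha)
  have h1d : ‖1 + d‖ ≤ 1 + ε := (norm_add_le 1 d).trans (by simpa using hd)
  calc ‖(1 + a) * conj b + c * conj (1 + d)‖ ≤ ‖1 + a‖ * ‖b‖ + ‖c‖ * ‖1 + d‖ :=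
        (norm_add_le _ _).trans_eq (by simp only [norm_mul, RCLike.norm_conj])
    _ ≤ (1 + ε) * ε + ε * (1 + ε) := by
        have hε : 0 ≤ ε := (norm_nonneg a).trans ha
        gcongr
    _ = 2 * ε * (1 + ε) := by ring

lemma norm_inner_integrand_le {ε : ℝ} {a b c d : ℂ} (ha : ‖a‖ ≤ ε)
    (hb : ‖b‖ ≤ ε) (hc : ‖c‖ ≤ ε) (hd : ‖d‖ ≤ ε) (l : ℂ) (x : ℝ) :
    ‖(1 + a) * exp (I * l * x) * conj (b * exp (-(I * conj l * x))) +
        c * exp (I * l * x) * conj ((1 + d) * exp (-(I * conj l * x)))‖ ≤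
      2 * ε * (1 + ε) * Real.exp (-(2 * l.im) * x) := by
  have hsplit : (1 + a) * exp (I * l * x) * conj (b * exp (-(I * conj l * x))) +
        c * exp (I * l * x) * conj ((1 + d) * exp (-(I * conj l * x))) =
      ((1 + a) * conj b + c * conj (1 + d)) * (exp (I * l * x) * exp (I * l * x)) := by
    simp only [map_mul, conj_exp_neg_I_mul_conj_mul_ofReal]; ring
  have hexp : Real.exp (-l.im * x) * Real.exp (-l.im * x) = Real.exp (-(2 * l.im) * x) := by
    rw [← Real.exp_add]; ring_nf
  rw [hsplit, norm_mul, norm_mul, norm_exp_I_mul_mul_ofReal, hexp]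
  gcongr
  exact norm_one_add_mul_conj_add_mul_conj_one_add_le ha hb hc hd

lemma norm_setIntegral_Ioo_le_mul_integral_exp {ε p : ℝ} {l : ℂ} {b₁ b₂ b₃ b₄ : ℝ → ℂ}
    (h₁ : ∀ᵐ x ∂(volume.restrict (Ioo 0 p)), ‖b₁ x‖ ≤ ε)
    (h₂ : ∀ᵐ x ∂(volume.restrict (Ioo 0 p)), ‖b₂ x‖ ≤ ε)
    (h₃ : ∀ᵐ x ∂(volume.restrict (Ioo 0 p)), ‖b₃ x‖ ≤ ε)
    (h₄ : ∀ᵐ x ∂(volume.restrict (Ioo 0 p)), ‖b₄ x‖ ≤ ε) :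
    ‖∫ x in Ioo 0 p,
        ((1 + b₁ x) * exp (I * l * x) * conj (b₂ x * exp (-(I * conj l * x))) +
          b₃ x * exp (I * l * x) * conj ((1 + b₄ x) * exp (-(I * conj l * x))))‖ ≤
      2 * ε * (1 + ε) * ∫ x in Ioo 0 p, Real.exp (-(2 * l.im) * x) := by
  rw [← integral_const_mul]
  refine norm_integral_le_of_norm_le ?_ ?_
  · exact (by fun_prop : Continuous fun x : ℝ ↦ 2 * ε * (1 + ε) * Real.exp (-(2 * l.im) * x))
      |>.integrableOn_Icc.mono_set Ioo_subset_Icc_self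
  · filter_upwards [h₁, h₂, h₃, h₄] with x hb₁ hb₂ hb₃ hb₄
    exact norm_inner_integrand_le hb₁ hb₂ hb₃ hb₄ l x

theorem stmt_8_general (ε : ℝ) (hε0 : 0 ≤ ε) (l : ℂ) (hl : 0 ≤ l.im)
    (b₁ b₂ b₃ b₄ : ℝ → ℂ)
    (h₁ : ∀ᵐ x ∂(volume.restrict (Set.Ioo 0 Real.pi)), ‖b₁ x‖ ≤ ε)
    (h₂ : ∀ᵐ x ∂(volume.restrict (Set.Ioo 0 Real.pi)), ‖b₂ x‖ ≤ ε)
    (h₃ : ∀ᵐ x ∂(volume.restrict (Set.Ioo 0 Real.pi)), ‖b₃ x‖ ≤ ε)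
    (h₄ : ∀ᵐ x ∂(volume.restrict (Set.Ioo 0 Real.pi)), ‖b₄ x‖ ≤ ε) :
    ‖∫ x in Set.Ioo (0 : ℝ) Real.pi,
        ((1 + b₁ x) * Complex.exp (Complex.I * l * x) *
            (starRingEnd ℂ) (b₂ x * Complex.exp (-(Complex.I * (starRingEnd ℂ) l * x))) +
          b₃ x * Complex.exp (Complex.I * l * x) *
            (starRingEnd ℂ)
              ((1 + b₄ x) * Complex.exp (-(Complex.I * (starRingEnd ℂ) l * x))))‖ ≤
        2 * ε * (1 + ε) * Real.pi ∧
      (0 < l.im →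
        ‖∫ x in Set.Ioo (0 : ℝ) Real.pi,
            ((1 + b₁ x) * Complex.exp (Complex.I * l * x) *
                (starRingEnd ℂ) (b₂ x * Complex.exp (-(Complex.I * (starRingEnd ℂ) l * x))) +
              b₃ x * Complex.exp (Complex.I * l * x) *
                (starRingEnd ℂ)
                  ((1 + b₄ x) * Complex.exp (-(Complex.I * (starRingEnd ℂ) l * x))))‖ ≤
          2 * ε * (1 + ε) * (1 / (2 * l.im))) := by
  have hnorm := norm_setIntegral_Ioo_le_mul_integral_exp (l := l) h₁ h₂ h₃ h₄
  refine ⟨hnorm.trans ?_, fun hl_pos ↦ hnorm.trans ?_⟩ <;> gcongr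
  · exact setIntegral_Ioo_exp_neg_mul_le_length (by positivity) Real.pi_pos.le
  · exact setIntegral_Ioo_exp_neg_mul_le_inv (by positivity) _

/-- Let `0 ≤ ε ≤ 1`, `λ ∈ ℂ` with `Im λ ≥ 0`, and `b₁,b₂,b₃,b₄ : (0,π) → ℂ` measurable with
`|b_j| ≤ ε` a.e.  For `Y(x) = ((1+b₁(x))e^{iλx}, b₃(x)e^{iλx})` and
`Z(x) = (b₂(x)e^{-i conj(λ) x}, (1+b₄(x))e^{-i conj(λ) x})` one has
`|⟨Y, Z⟩_H| ≤ 2ε(1+ε)·min(π, 1/(2 Im λ))` (interpreting `1/(2·0)` as `+∞`, i.e. the bound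
with `1/(2 Im λ)` is asserted when `Im λ > 0`). -/
theorem stmt_8 (ε : ℝ) (hε0 : 0 ≤ ε) (hε1 : ε ≤ 1) (l : ℂ) (hl : 0 ≤ l.im)
    (b₁ b₂ b₃ b₄ : ℝ → ℂ)
    (hm₁ : Measurable b₁) (hm₂ : Measurable b₂) (hm₃ : Measurable b₃) (hm₄ : Measurable b₄)
    (h₁ : ∀ᵐ x ∂(volume.restrict (Set.Ioo 0 Real.pi)), ‖b₁ x‖ ≤ ε)
    (h₂ : ∀ᵐ x ∂(volume.restrict (Set.Ioo 0 Real.pi)), ‖b₂ x‖ ≤ ε)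
    (h₃ : ∀ᵐ x ∂(volume.restrict (Set.Ioo 0 Real.pi)), ‖b₃ x‖ ≤ ε)
    (h₄ : ∀ᵐ x ∂(volume.restrict (Set.Ioo 0 Real.pi)), ‖b₄ x‖ ≤ ε) :
    ‖∫ x in Set.Ioo (0 : ℝ) Real.pi,
        ((1 + b₁ x) * Complex.exp (Complex.I * l * x) *
            (starRingEnd ℂ) (b₂ x * Complex.exp (-(Complex.I * (starRingEnd ℂ) l * x))) +
          b₃ x * Complex.exp (Complex.I * l * x) *
            (starRingEnd ℂ)
              ((1 + b₄ x) * Complex.exp (-(Complex.I * (starRingEnd ℂ) l * x))))‖ ≤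
        2 * ε * (1 + ε) * Real.pi ∧
      (0 < l.im →
        ‖∫ x in Set.Ioo (0 : ℝ) Real.pi,
            ((1 + b₁ x) * Complex.exp (Complex.I * l * x) *
                (starRingEnd ℂ) (b₂ x * Complex.exp (-(Complex.I * (starRingEnd ℂ) l * x))) +
              b₃ x * Complex.exp (Complex.I * l * x) *
                (starRingEnd ℂ)
                  ((1 + b₄ x) * Complex.exp (-(Complex.I * (starRingEnd ℂ) l * x))))‖ ≤
          2 * ε * (1 + ε) * (1 / (2 * l.im))) :=
  stmt_8_general ε hε0 l hl b₁ b₂ b₃ b₄ h₁ h₂ h₃ h₄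
end

section
/- Let E be a complex inner product space, let c > 0 and δ ≥ 0, let u₁, u₂, w₁, w₂ ∈ E, and let C₁, C₂, D₁, D₂ ∈ ℂ. Suppose ‖C₁u₁ + C₂u₂‖ ≥ c(|C₁|‖u₁‖ + |C₂|‖u₂‖), ‖D₁w₁ + D₂w₂‖ ≥ c(|D₁|‖w₁‖ + |D₂|‖w₂‖), and |⟨u_j, w_k⟩| ≤ δ‖u_j‖‖w_k‖ for all j,k ∈ {1,2}. Then |⟨C₁u₁ + C₂u₂, D₁w₁ + D₂w₂⟩| ≤ (δ/c²)·‖C₁u₁ + C₂u₂‖·‖D₁w₁ + D₂w₂‖. -/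
open Finset

open scoped InnerProductSpace

theorem norm_inner_sum_smul_sum_smul_le {𝕜 E ι κ : Type*} [RCLike 𝕜] [NormedAddCommGroup E]
    [InnerProductSpace 𝕜 E] {δ : ℝ} (s : Finset ι) (t : Finset κ) (C : ι → 𝕜) (u : ι → E)
    (D : κ → 𝕜) (w : κ → E) (h : ∀ i ∈ s, ∀ j ∈ t, ‖⟪u i, w j⟫_𝕜‖ ≤ δ * (‖u i‖ * ‖w j‖)) :
    ‖⟪∑ i ∈ s, C i • u i, ∑ j ∈ t, D j • w j⟫_𝕜‖ ≤
      δ * (∑ i ∈ s, ‖C i‖ * ‖u i‖) * ∑ j ∈ t, ‖D j‖ * ‖w j‖ := by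
  have hexpand : ⟪∑ i ∈ s, C i • u i, ∑ j ∈ t, D j • w j⟫_𝕜 =
      ∑ i ∈ s, ∑ j ∈ t, starRingEnd 𝕜 (C i) * D j * ⟪u i, w j⟫_𝕜 := by
    rw [sum_inner]
    refine sum_congr rfl fun i _ => ?_
    rw [inner_smul_left, inner_sum, mul_sum]
    refine sum_congr rfl fun j _ => ?_
    rw [inner_smul_right]
    ring
  calc ‖⟪∑ i ∈ s, C i • u i, ∑ j ∈ t, D j • w j⟫_𝕜‖
      ≤ ∑ i ∈ s, ∑ j ∈ t, ‖starRingEnd 𝕜 (C i) * D j * ⟪u i, w j⟫_𝕜‖ := by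
        rw [hexpand]
        exact (norm_sum_le _ _).trans (sum_le_sum fun i _ => norm_sum_le _ _)
    _ ≤ ∑ i ∈ s, ∑ j ∈ t, ‖C i‖ * ‖D j‖ * (δ * (‖u i‖ * ‖w j‖)) := by
        refine sum_le_sum fun i hi => sum_le_sum fun j hj => ?_
        rw [norm_mul, norm_mul, RCLike.norm_conj]
        gcongr
        exact h i hi j hj
    _ = δ * (∑ i ∈ s, ‖C i‖ * ‖u i‖) * ∑ j ∈ t, ‖D j‖ * ‖w j‖ := by
        rw [mul_assoc, sum_mul_sum, mul_sum]
        refine sum_congr rfl fun i _ => ?_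
        rw [mul_sum]
        exact sum_congr rfl fun j _ => by ring

/-- Let `E` be a complex inner product space, `c > 0`, `δ ≥ 0`, `u₁,u₂,w₁,w₂ ∈ E`,
`C₁,C₂,D₁,D₂ ∈ ℂ`.  Suppose `‖C₁u₁ + C₂u₂‖ ≥ c(|C₁|‖u₁‖ + |C₂|‖u₂‖)`,
`‖D₁w₁ + D₂w₂‖ ≥ c(|D₁|‖w₁‖ + |D₂|‖w₂‖)`, and `|⟨u_j, w_k⟩| ≤ δ‖u_j‖‖w_k‖` for all
`j,k ∈ {1,2}`. Then
`|⟨C₁u₁ + C₂u₂, D₁w₁ + D₂w₂⟩| ≤ (δ/c²)·‖C₁u₁ + C₂u₂‖·‖D₁w₁ + D₂w₂‖`. -/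
theorem stmt_12 {E : Type*} [NormedAddCommGroup E] [InnerProductSpace ℂ E]
    (c δ : ℝ) (hc : 0 < c) (hδ : 0 ≤ δ) (u₁ u₂ w₁ w₂ : E) (C₁ C₂ D₁ D₂ : ℂ)
    (hu : c * (‖C₁‖ * ‖u₁‖ + ‖C₂‖ * ‖u₂‖) ≤ ‖C₁ • u₁ + C₂ • u₂‖)
    (hw : c * (‖D₁‖ * ‖w₁‖ + ‖D₂‖ * ‖w₂‖) ≤ ‖D₁ • w₁ + D₂ • w₂‖)
    (h11 : ‖(inner ℂ u₁ w₁ : ℂ)‖ ≤ δ * (‖u₁‖ * ‖w₁‖))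
    (h12 : ‖(inner ℂ u₁ w₂ : ℂ)‖ ≤ δ * (‖u₁‖ * ‖w₂‖))
    (h21 : ‖(inner ℂ u₂ w₁ : ℂ)‖ ≤ δ * (‖u₂‖ * ‖w₁‖))
    (h22 : ‖(inner ℂ u₂ w₂ : ℂ)‖ ≤ δ * (‖u₂‖ * ‖w₂‖)) :
    ‖(inner ℂ (C₁ • u₁ + C₂ • u₂) (D₁ • w₁ + D₂ • w₂) : ℂ)‖ ≤
      δ / c ^ 2 * ‖C₁ • u₁ + C₂ • u₂‖ * ‖D₁ • w₁ + D₂ • w₂‖ := by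
  have hinner := norm_inner_sum_smul_sum_smul_le univ univ ![C₁, C₂] ![u₁, u₂] ![D₁, D₂]
    ![w₁, w₂] (δ := δ) (by simp [Fin.forall_fin_two, *])
  simp only [Fin.sum_univ_two, Matrix.cons_val_zero, Matrix.cons_val_one] at hinner
  have hA := (le_div_iff₀' hc).mpr hu
  have hB := (le_div_iff₀' hc).mpr hw
  calc _ ≤ δ * (‖C₁‖ * ‖u₁‖ + ‖C₂‖ * ‖u₂‖) * (‖D₁‖ * ‖w₁‖ + ‖D₂‖ * ‖w₂‖) := hinner
    _ ≤ δ * (‖C₁ • u₁ + C₂ • u₂‖ / c) * (‖D₁ • w₁ + D₂ • w₂‖ / c) := by gcongr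
    _ = δ / c ^ 2 * ‖C₁ • u₁ + C₂ • u₂‖ * ‖D₁ • w₁ + D₂ • w₂‖ := by ring
end
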